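/- arXiv:1812.06392 — 6 statements merged into one kernel-verified Lean document; each statement's English description precedes it below -/
import Mathlib

section
/- The improper integral ∫₀^∞ e^t·t²/(e^t - 1)² dt equals 2·ζ(2), i.e. π²/3. -/
/-! Expanding `eᵗ / (eᵗ - 1)² = ∑ n e^{-nt}` and integrating term by term against `t^{s-1}`
shows that the Mellin transform of `eᵗ / (eᵗ - 1)²` is `Γ(s) ζ(s - 1)` for `re s > 2`.
The integral in question is this transform at `s = 3`, namely `2 ζ(2) = π² / 3`. -/

open MeasureTheory Complex Set

lemma Real.hasSum_nat_mul_exp_neg_mul {t : ℝ} (ht : 0 < t) :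
    HasSum (fun n : ℕ ↦ n * Real.exp (-n * t)) (Real.exp t / (Real.exp t - 1) ^ 2) := by
  have hr : ‖Real.exp (-t)‖ < 1 := by
    rw [Real.norm_of_nonneg (Real.exp_pos _).le, Real.exp_lt_one_iff]
    linarith
  have hsum : Real.exp (-t) / (1 - Real.exp (-t)) ^ 2 = Real.exp t / (Real.exp t - 1) ^ 2 := by
    have : Real.exp t - 1 ≠ 0 := (sub_pos.mpr (Real.one_lt_exp_iff.mpr ht)).ne'
    rw [Real.exp_neg]
    field_simp
  simpa only [hsum, ← Real.exp_nat_mul, neg_mul, mul_neg] using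
    hasSum_coe_mul_geometric_of_norm_lt_one hr

lemma summable_norm_natCast_div_natCast_rpow {s : ℝ} (hs : 2 < s) :
    Summable fun n : ℕ ↦ ‖(n : ℂ)‖ / (n : ℝ) ^ s := by
  refine (Real.summable_one_div_nat_rpow.mpr (by linarith : 1 < s - 1)).congr fun n ↦ ?_
  rcases eq_or_ne n 0 with rfl | hn
  · simp [Real.zero_rpow (by linarith : s - 1 ≠ 0)]
  · rw [Complex.norm_natCast, Real.rpow_sub_one (Nat.cast_ne_zero.mpr hn), one_div_div]

lemma one_div_natCast_cpow_sub_one {s : ℂ} (hs : s ≠ 1) (n : ℕ) :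
    1 / (n : ℂ) ^ (s - 1) = n / ((n : ℝ) : ℂ) ^ s := by
  rcases eq_or_ne n 0 with rfl | hn
  · simp [zero_cpow (sub_ne_zero.mpr hs)]
  · rw [ofReal_natCast, cpow_sub _ _ (Nat.cast_ne_zero.mpr hn), cpow_one, one_div_div]

lemma mellin_exp_div_exp_sub_one_sq {s : ℂ} (hs : 2 < s.re) :
    mellin (fun t : ℝ ↦ ((Real.exp t / (Real.exp t - 1) ^ 2 : ℝ) : ℂ)) s =
      Gamma s * riemannZeta (s - 1) := by
  have hmellin := hasSum_mellin (a := fun n : ℕ ↦ (n : ℂ)) (p := fun n : ℕ ↦ (n : ℝ))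
    (F := fun t : ℝ ↦ ((Real.exp t / (Real.exp t - 1) ^ 2 : ℝ) : ℂ))
    (fun n ↦ n.eq_zero_or_pos.imp (by simp [·]) Nat.cast_pos.mpr) (by linarith)
    (fun t ht ↦ by simpa using Complex.hasSum_ofReal.mpr (Real.hasSum_nat_mul_exp_neg_mul ht))
    (summable_norm_natCast_div_natCast_rpow hs)
  have hs1 : s ≠ 1 := by rintro rfl; norm_num at hs
  rw [zeta_eq_tsum_one_div_nat_cpow (by simp; linarith), ← tsum_mul_left, ← hmellin.tsum_eq]
  simp_rw [one_div_natCast_cpow_sub_one hs1, mul_div_assoc]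

lemma ofReal_setIntegral_mul_pow_eq_mellin (f : ℝ → ℝ) (n : ℕ) :
    ((∫ t in Ioi 0, f t * t ^ n : ℝ) : ℂ) = mellin (fun t ↦ (f t : ℂ)) (n + 1) := by
  rw [mellin, ← integral_complex_ofReal]
  refine setIntegral_congr_fun measurableSet_Ioi fun t _ ↦ ?_
  rw [add_sub_cancel_right, cpow_natCast, smul_eq_mul, ofReal_mul, ofReal_pow, mul_comm]

theorem integral_exp_mul_sq_div_exp_sub_one_sq :
    ((∫ t in Set.Ioi (0:ℝ), Real.exp t * t ^ 2 / (Real.exp t - 1) ^ 2 : ℝ) : ℂ) =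
      2 * riemannZeta 2 ∧
    (∫ t in Set.Ioi (0:ℝ), Real.exp t * t ^ 2 / (Real.exp t - 1) ^ 2 : ℝ) =
      Real.pi ^ 2 / 3 := by
  have hzeta : ((∫ t in Ioi (0:ℝ), Real.exp t * t ^ 2 / (Real.exp t - 1) ^ 2 : ℝ) : ℂ) =
      2 * riemannZeta 2 := by
    calc _ = ((∫ t in Ioi (0:ℝ), Real.exp t / (Real.exp t - 1) ^ 2 * t ^ (2 : ℕ) : ℝ) : ℂ) := by
          simp_rw [mul_div_right_comm]
      _ = mellin (fun t : ℝ ↦ ((Real.exp t / (Real.exp t - 1) ^ 2 : ℝ) : ℂ)) 3 := by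
          rw [ofReal_setIntegral_mul_pow_eq_mellin]; norm_num
      _ = Gamma 3 * riemannZeta (3 - 1) := mellin_exp_div_exp_sub_one_sq (by norm_num)
      _ = 2 * riemannZeta 2 := by norm_num [Gamma_ofNat_eq_factorial]
  refine ⟨hzeta, ?_⟩
  rw [riemannZeta_two] at hzeta
  exact_mod_cast hzeta.trans (by ring : 2 * ((Real.pi : ℂ) ^ 2 / 6) = (Real.pi : ℂ) ^ 2 / 3)
end

section
/- The improper integral ∫₀^∞ (1/(e^t - 1) - 1/(t·e^t)) dt equals the Euler–Mascheroni constant γ. -/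
/-!
Write `f t = 1 / (eᵗ - 1) - 1 / (t eᵗ)`. Summing a geometric series,
`(1 - e^{-nt}) f t = ∑_{k=1}^n e^{-kt} - (e^{-t} - e^{-(n+1)t}) / t`.
The sum integrates to the harmonic number `H_n` and the last term is a Frullani integral equal to
`log (n + 1)`, so the damped integrals are `H_n - log (n + 1) → γ`. Since `0 ≤ f t ≤ e^{-t}`,
dominated convergence shows that they also tend to `∫ f`.
-/

open MeasureTheory Set Real Filter Topology

noncomputable def eulerMascheroniIntegrand (t : ℝ) : ℝ := 1 / (exp t - 1) - 1 / (t * exp t)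

lemma integral_exp_neg_mul_Ioi {c : ℝ} (hc : 0 < c) :
    ∫ t in Ioi (0 : ℝ), exp (-(c * t)) = c⁻¹ := by
  simp_rw [← neg_mul]
  rw [integral_exp_mul_Ioi (neg_neg_of_pos hc)]
  simp

lemma integrableOn_exp_neg_mul_Ioi {c : ℝ} (hc : 0 < c) :
    IntegrableOn (fun t ↦ exp (-(c * t))) (Ioi 0) := by
  simpa only [neg_mul] using exp_neg_integrableOn_Ioi 0 hc

lemma sum_range_exp_neg_mul {t : ℝ} (ht : 0 < t) (n : ℕ) :
    ∑ k ∈ Finset.range n, exp (-((k + 1) * t)) = (1 - exp (-(n * t))) / (exp t - 1) := by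
  have hexp : exp t - 1 ≠ 0 := by linarith [one_lt_exp_iff.mpr ht]
  have hq : exp (-t) ≠ 1 := by simpa using ht.ne'
  have hpow (m : ℝ) (k : ℕ) : exp (-((m + k) * t)) = exp (-(m * t)) * exp (-t) ^ k := by
    rw [← exp_nat_mul, ← exp_add]; ring_nf
  simp_rw [add_comm _ (1 : ℝ)]
  simp only [hpow, ← Finset.mul_sum, geom_sum_eq hq]
  rw [show exp (-(n * t)) = exp (-t) ^ n by simpa using hpow 0 n]
  have hinv : exp (-t) * exp t = 1 := by rw [← exp_add, neg_add_cancel, exp_zero]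
  field_simp
  linear_combination (exp (-t) ^ n - 1) * hinv

lemma integral_sum_range_exp_neg_mul (n : ℕ) :
    ∫ t in Ioi (0 : ℝ), ∑ k ∈ Finset.range n, exp (-((k + 1) * t)) = harmonic n := by
  rw [integral_finsetSum _ fun k _ ↦ integrableOn_exp_neg_mul_Ioi k.cast_add_one_pos]
  simp [harmonic, integral_exp_neg_mul_Ioi, Nat.cast_add_one_pos]

lemma integral_inv_mul_exp_neg_mul_sub_exp_neg_mul_Ioi {a b : ℝ} (ha : 0 < a) (hb : 0 < b)
    (hint : IntegrableOn (fun t ↦ t⁻¹ * (exp (-(a * t)) - exp (-(b * t)))) (Ioi 0)) :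
    ∫ t in Ioi (0 : ℝ), t⁻¹ * (exp (-(a * t)) - exp (-(b * t))) = log (b / a) := by
  have hcont : Continuous fun x : ℝ ↦ exp (-x) := by fun_prop
  have hzero : Tendsto (fun x : ℝ ↦ exp (-x)) (𝓝[>] 0) (𝓝 1) := by
    simpa using hcont.continuousWithinAt.tendsto (x := 0) (s := Ioi 0)
  simpa using Frullani.integral_Ioi_eq (hcont.locallyIntegrable.locallyIntegrableOn _) ha hb
    hzero tendsto_exp_neg_atTop_nhds_zero hint

namespace eulerMascheroniIntegrand

lemma nonneg {t : ℝ} (ht : 0 < t) : 0 ≤ eulerMascheroniIntegrand t := by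
  have hexp : 1 < exp t := one_lt_exp_iff.mpr ht
  rw [eulerMascheroniIntegrand, sub_nonneg]
  apply one_div_le_one_div_of_le (by linarith)
  nlinarith [add_one_le_exp (-t), exp_neg t, mul_inv_cancel₀ (exp_pos t).ne']

lemma le_exp_neg {t : ℝ} (ht : 0 < t) : eulerMascheroniIntegrand t ≤ exp (-t) := by
  have hexp : 0 < exp t - 1 := by linarith [one_lt_exp_iff.mpr ht]
  rw [eulerMascheroniIntegrand, exp_neg, div_sub_div _ _ hexp.ne' (by positivity),
    div_le_iff₀ (by positivity)]
  field_simp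
  nlinarith [add_one_le_exp t]

lemma integrableOn : IntegrableOn eulerMascheroniIntegrand (Ioi 0) := by
  have hcont : ContinuousOn eulerMascheroniIntegrand (Ioi 0) := by
    intro t ht
    have ht : 0 < t := ht
    have hexp : exp t - 1 ≠ 0 := by linarith [one_lt_exp_iff.mpr ht]
    unfold eulerMascheroniIntegrand
    fun_prop (disch := positivity)
  refine (exp_neg_integrableOn_Ioi 0 one_pos).mono'
    (hcont.aestronglyMeasurable measurableSet_Ioi) ?_
  filter_upwards [ae_restrict_mem measurableSet_Ioi] with t ht
  rw [norm_of_nonneg (nonneg ht), neg_one_mul]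
  exact le_exp_neg ht

lemma one_sub_exp_neg_mul_mul_eq {t : ℝ} (ht : 0 < t) (n : ℕ) :
    (1 - exp (-(n * t))) * eulerMascheroniIntegrand t =
      ∑ k ∈ Finset.range n, exp (-((k + 1) * t)) -
        t⁻¹ * (exp (-(1 * t)) - exp (-((n + 1) * t))) := by
  rw [sum_range_exp_neg_mul ht, eulerMascheroniIntegrand]
  rw [add_mul, neg_add, exp_add, one_mul, exp_neg t]
  field_simp

lemma norm_one_sub_exp_neg_mul_le {t : ℝ} (ht : 0 < t) (n : ℕ) :
    ‖(1 - exp (-(n * t))) * eulerMascheroniIntegrand t‖ ≤ eulerMascheroniIntegrand t := by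
  have hexp : exp (-(n * t)) ≤ 1 := exp_le_one_iff.mpr (by simp only [neg_nonpos]; positivity)
  rw [norm_of_nonneg (mul_nonneg (by linarith) (nonneg ht))]
  exact mul_le_of_le_one_left (nonneg ht) (by linarith [exp_pos (-(n * t))])

lemma aestronglyMeasurable_one_sub_exp_neg_mul (n : ℕ) :
    AEStronglyMeasurable (fun t ↦ (1 - exp (-(n * t))) * eulerMascheroniIntegrand t)
      (volume.restrict (Ioi 0)) :=
  (by fun_prop : Continuous fun t : ℝ ↦ 1 - exp (-(n * t))).aestronglyMeasurable.mul
    integrableOn.aestronglyMeasurable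

lemma integrableOn_one_sub_exp_neg_mul (n : ℕ) :
    IntegrableOn (fun t ↦ (1 - exp (-(n * t))) * eulerMascheroniIntegrand t) (Ioi 0) :=
  integrableOn.mono' (aestronglyMeasurable_one_sub_exp_neg_mul n) <|
    (ae_restrict_mem measurableSet_Ioi).mono fun _ ht ↦ norm_one_sub_exp_neg_mul_le ht n

lemma integral_one_sub_exp_neg_mul (n : ℕ) :
    ∫ t in Ioi (0 : ℝ), (1 - exp (-(n * t))) * eulerMascheroniIntegrand t =
      eulerMascheroniSeq n := by
  have hsum : IntegrableOn (fun t ↦ ∑ k ∈ Finset.range n, exp (-((k + 1) * t))) (Ioi 0) :=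
    integrable_finsetSum _ fun k _ ↦ integrableOn_exp_neg_mul_Ioi k.cast_add_one_pos
  have hid := fun t (ht : t ∈ Ioi (0 : ℝ)) ↦ one_sub_exp_neg_mul_mul_eq ht n
  -- By the identity `hid`, the Frullani integrand is a difference of two integrable functions.
  have hfrullani :
      IntegrableOn (fun t ↦ t⁻¹ * (exp (-(1 * t)) - exp (-((n + 1) * t)))) (Ioi 0) :=
    (hsum.sub (integrableOn_one_sub_exp_neg_mul n)).congr_fun
      (fun t ht ↦ by simp only [Pi.sub_apply, hid t ht]; ring) measurableSet_Ioi
  rw [setIntegral_congr_fun measurableSet_Ioi hid, integral_sub hsum hfrullani,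
    integral_sum_range_exp_neg_mul,
    integral_inv_mul_exp_neg_mul_sub_exp_neg_mul_Ioi one_pos n.cast_add_one_pos hfrullani,
    div_one, eulerMascheroniSeq]

lemma tendsto_integral_one_sub_exp_neg_mul :
    Tendsto (fun n : ℕ ↦ ∫ t in Ioi (0 : ℝ), (1 - exp (-(n * t))) * eulerMascheroniIntegrand t)
      atTop (𝓝 (∫ t in Ioi (0 : ℝ), eulerMascheroniIntegrand t)) := by
  refine tendsto_integral_of_dominated_convergence eulerMascheroniIntegrand
    aestronglyMeasurable_one_sub_exp_neg_mul integrableOn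
    (fun n ↦ (ae_restrict_mem measurableSet_Ioi).mono fun _ ht ↦ norm_one_sub_exp_neg_mul_le ht n)
    ((ae_restrict_mem measurableSet_Ioi).mono fun t ht ↦ ?_)
  have hdecay : Tendsto (fun n : ℕ ↦ exp (-(n * t))) atTop (𝓝 0) :=
    tendsto_exp_atBot.comp <| tendsto_neg_atTop_atBot.comp <|
      tendsto_natCast_atTop_atTop.atTop_mul_const ht
  simpa using
    ((tendsto_const_nhds (x := (1 : ℝ))).sub hdecay).mul_const (eulerMascheroniIntegrand t)

end eulerMascheroniIntegrand

theorem integral_one_div_exp_sub_one_sub_one_div_mul_exp :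
    (∫ t in Set.Ioi (0:ℝ), (1 / (Real.exp t - 1) - 1 / (t * Real.exp t)) : ℝ) =
      Real.eulerMascheroniConstant :=
  tendsto_nhds_unique eulerMascheroniIntegrand.tendsto_integral_one_sub_exp_neg_mul
    (by simpa only [eulerMascheroniIntegrand.integral_one_sub_exp_neg_mul]
      using tendsto_eulerMascheroniSeq)
end

section
/- For every complex s with Re(s) > 1, (s-1)(ζ(s)-1) - 1 = -∑_{r=1}^∞ [(s-1)s⋯(s+r-1)/(r+1)!]·(ζ(s+r)-1). -/
open Complex Finset

lemma slit (w : ℂ) (hw : ‖w‖ < 1) : (1 - w) ∈ Complex.slitPlane := by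
  refine Complex.mem_slitPlane_iff.2 (Or.inl ?_)
  have := Complex.abs_re_le_norm w
  simp only [Complex.sub_re, Complex.one_re]
  have : w.re < 1 := lt_of_le_of_lt (le_trans (le_abs_self _) this) hw
  linarith

lemma hder (a : ℂ) (w : ℂ) (hw : ‖w‖ < 1) (b : ℂ) :
    HasDerivAt (fun z : ℂ => (1 - z) ^ b) (-(b * (1 - w) ^ (b - 1))) w := by
  have h1 : HasDerivAt (fun z : ℂ => 1 - z) (-1) w := (hasDerivAt_id w).const_sub 1
  have := (h1.cpow_const (c := b) (slit w hw))
  simpa using this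

lemma iter_deriv (a : ℂ) (n : ℕ) :
    ∀ w : ℂ, ‖w‖ < 1 → iteratedDeriv n (fun z : ℂ => (1 - z) ^ (-a)) w
      = (∏ i ∈ Finset.range n, (a + i)) * (1 - w) ^ (-a - n) := by
  induction n with
  | zero => intro w hw; simp
  | succ n ih =>
    intro w hw
    rw [iteratedDeriv_succ]
    have hev : iteratedDeriv n (fun z : ℂ => (1 - z) ^ (-a))
        =ᶠ[nhds w] fun z => (∏ i ∈ Finset.range n, (a + i)) * (1 - z) ^ (-a - n) := by
      filter_upwards [Metric.ball_mem_nhds w (by linarith : (0:ℝ) < 1 - ‖w‖)] with z hz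
      apply ih
      have : dist z w < 1 - ‖w‖ := hz
      calc ‖z‖ ≤ ‖z - w‖ + ‖w‖ := by simpa using norm_add_le (z - w) w
      _ < 1 := by rw [← dist_eq_norm] at *; linarith
    rw [hev.deriv_eq]
    have := ((hder a w hw (-a - n)).const_mul (∏ i ∈ Finset.range n, (a + i))).deriv
    rw [this]
    rw [Finset.prod_range_succ]
    push_cast
    ring_nf

lemma binom_hasSum (a : ℂ) {z : ℂ} (hz : ‖z‖ < 1) :
    HasSum (fun r : ℕ => (∏ i ∈ Finset.range r, (a + i)) / (r.factorial : ℂ) * z ^ r)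
      ((1 - z) ^ (-a)) := by
  have hf : DifferentiableOn ℂ (fun z : ℂ => (1 - z) ^ (-a)) (Metric.ball 0 1) := by
    intro w hw
    exact ((hder a w (by simpa using hw) (-a)).differentiableAt).differentiableWithinAt
  have H := Complex.hasSum_taylorSeries_on_ball hf (mem_ball_zero_iff.2 hz)
  convert H using 2 with n
  · rfl
  rw [iter_deriv a n 0 (by norm_num)]
  simp [Complex.one_cpow, smul_eq_mul, div_eq_mul_inv]
  ring

lemma zeta_tail (w : ℂ) (hw : 1 < w.re) :
    HasSum (fun n : ℕ => (1 : ℂ) / ((n : ℂ) + 2) ^ w) (riemannZeta w - 1) := by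
  have hsum : Summable (fun n : ℕ => (1 : ℂ) / ((n : ℂ) + 1) ^ w) := by
    have := Complex.summable_one_div_nat_cpow.2 hw
    have h2 := (summable_nat_add_iff 1).2 this
    simpa using h2
  have key := hsum.hasSum
  rw [zeta_eq_tsum_one_div_nat_add_one_cpow hw] at *
  have h0 := (hasSum_nat_add_iff' 1).2 key
  simp only [Finset.range_one, Finset.sum_singleton, Nat.cast_zero, zero_add, one_cpow] at h0
  convert h0 using 2 with n
  · rfl
  · push_cast; ring_nf
  · norm_num

lemma csummable (a : ℂ) :
    Summable (fun k : ℕ => ‖(∏ i ∈ Finset.range k, (a + i)) / (k.factorial : ℂ)‖ * (2:ℝ)⁻¹ ^ k) := by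
  apply summable_of_ratio_norm_eventually_le (r := 3/4) (by norm_num)
  filter_upwards [Filter.eventually_ge_atTop (Nat.ceil (2 * ‖a‖))] with k hk
  have hk' : 2 * ‖a‖ ≤ k := le_trans (Nat.le_ceil _) (by exact_mod_cast hk)
  have hfac : ((k+1).factorial : ℂ) = (k+1) * (k.factorial : ℂ) := by
    push_cast [Nat.factorial_succ]; ring
  have hprod : (∏ i ∈ Finset.range (k+1), (a + i)) =
      (∏ i ∈ Finset.range k, (a + i)) * (a + k) := Finset.prod_range_succ _ _
  have hpos : (0:ℝ) < k + 1 := by positivity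
  have h1 : ‖(∏ i ∈ Finset.range (k+1), (a + i)) / ((k+1).factorial : ℂ)‖
      = ‖(∏ i ∈ Finset.range k, (a + i)) / (k.factorial : ℂ)‖ * (‖a + k‖ / (k+1)) := by
    rw [hprod, hfac]
    rw [norm_div, norm_div, norm_mul, norm_mul]
    have : ‖((k:ℂ)+1)‖ = (k:ℝ)+1 := by
      rw [show ((k:ℂ)+1) = ((k+1 : ℕ) : ℂ) by push_cast; ring, Complex.norm_natCast]
      push_cast; ring
    rw [this]
    simp only [div_eq_mul_inv, mul_inv]
    ring
  have hbound : ‖a + k‖ / (k+1) ≤ 3/2 := by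
    rw [div_le_iff₀ hpos]
    calc ‖a + (k:ℂ)‖ ≤ ‖a‖ + ‖(k:ℂ)‖ := norm_add_le _ _
    _ = ‖a‖ + k := by rw [Complex.norm_natCast]
    _ ≤ 3/2 * (k+1) := by nlinarith [norm_nonneg a]
  have hnn : (0:ℝ) ≤ ‖(∏ i ∈ Finset.range k, (a + i)) / (k.factorial : ℂ)‖ * (2:ℝ)⁻¹ ^ k := by
    positivity
  rw [Real.norm_of_nonneg (by positivity), Real.norm_of_nonneg (by positivity)]
  rw [h1, pow_succ]
  calc ‖(∏ i ∈ Finset.range k, (a + i)) / (k.factorial : ℂ)‖ * (‖a + k‖ / (k+1)) * ((2:ℝ)⁻¹ ^ k * 2⁻¹)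
      ≤ ‖(∏ i ∈ Finset.range k, (a + i)) / (k.factorial : ℂ)‖ * (3/2) * ((2:ℝ)⁻¹ ^ k * 2⁻¹) := by
        apply mul_le_mul_of_nonneg_right (mul_le_mul_of_nonneg_left hbound (norm_nonneg _)) (by positivity)
    _ = 3/4 * (‖(∏ i ∈ Finset.range k, (a + i)) / (k.factorial : ℂ)‖ * (2:ℝ)⁻¹ ^ k) := by ring

lemma znorm (s : ℂ) (r n : ℕ) (hs : 1 < s.re) :
    ‖(1 : ℂ) / ((n : ℂ) + 2) ^ (s + ((r:ℂ) + 1))‖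
      ≤ (2:ℝ)⁻¹ ^ (r + 1) * ((n:ℝ) + 2) ^ (-s.re) := by
  have hpos : (0:ℝ) < (n:ℝ) + 2 := by positivity
  have hcast : ((n : ℂ) + 2) = (((n:ℝ) + 2 : ℝ) : ℂ) := by push_cast; ring
  rw [norm_div, norm_one, hcast,
    Complex.norm_cpow_eq_rpow_re_of_pos hpos]
  have hre : (s + ((r:ℂ) + 1)).re = s.re + (r + 1 : ℝ) := by
    simp [Complex.add_re, Complex.natCast_re, Complex.one_re]
  rw [hre, Real.rpow_add hpos, one_div, mul_inv]
  rw [show ((r:ℝ) + 1) = ((r + 1 : ℕ) : ℝ) by push_cast; ring, Real.rpow_natCast]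
  rw [← Real.rpow_neg hpos.le]
  rw [mul_comm]
  apply mul_le_mul_of_nonneg_right _ (Real.rpow_nonneg hpos.le _)
  rw [inv_pow]
  apply inv_anti₀ (by positivity)
  apply pow_le_pow_left₀ (by norm_num) (by linarith)

lemma inner_r (s : ℂ) (n : ℕ) :
    HasSum (fun r : ℕ => (∏ i ∈ Finset.range (r + 2), (s - 1 + i)) / ((r + 2).factorial : ℂ)
        * ((1 : ℂ) / ((n : ℂ) + 2) ^ (s + ((r : ℂ) + 1))))
      (((n : ℂ) + 1) ^ (-(s - 1)) - ((n : ℂ) + 2) ^ (-(s - 1)) - (s - 1) * ((n : ℂ) + 2) ^ (-s)) := by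
  set a := s - 1 with ha
  set x : ℂ := ((n : ℂ) + 2)⁻¹ with hx
  have hb : ((n : ℂ) + 2) ≠ 0 := by
    intro h
    have := congrArg Complex.re h
    push_cast at this
    simp at this
    linarith [Nat.cast_nonneg (α := ℝ) n]
  have hxnorm : ‖x‖ < 1 := by
    rw [hx, norm_inv]
    have : (2:ℝ) ≤ ‖(n : ℂ) + 2‖ := by
      calc (2:ℝ) = ‖(2:ℂ)‖ := by norm_num
      _ ≤ ‖(n:ℂ) + 2‖ := by
          rw [show ((n:ℂ)+2) = (((n+2 : ℕ)):ℂ) by push_cast; ring, Complex.norm_natCast]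
          norm_num
    rw [inv_lt_one_iff₀]
    right; linarith
  have H := (binom_hasSum a hxnorm)
  have H2 := (hasSum_nat_add_iff' 2).2 H
  have hc01 : ∑ i ∈ Finset.range 2, (∏ j ∈ Finset.range i, (a + j)) / (i.factorial : ℂ) * x ^ i
      = 1 + a * x := by
    simp [Finset.sum_range_succ]
  rw [hc01] at H2
  have H3 := H2.mul_left (((n : ℂ) + 2) ^ (-a))
  convert H3 using 1
  · rfl
  · funext r
    have hexp : s + ((r:ℂ) + 1) = -(-a) + ((r + 2 : ℕ) : ℂ) := by push_cast; ring
    rw [hexp, Complex.cpow_add _ _ hb, Complex.cpow_natCast, Complex.cpow_neg]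
    rw [hx, inv_pow, one_div, mul_inv_rev, inv_inv]
    ring
  · have h1x : (1 : ℂ) - x = ((((n:ℝ) + 1) / ((n:ℝ) + 2) : ℝ) : ℂ) := by
      rw [hx]
      push_cast
      field_simp
      ring
    have hnn2 : ((n:ℂ) + 2) = (((n:ℝ) + 2 : ℝ) : ℂ) := by push_cast; ring
    have hkey : ((n : ℂ) + 2) ^ (-a) * ((1 : ℂ) - x) ^ (-a) = ((n : ℂ) + 1) ^ (-a) := by
      rw [h1x, hnn2, ← Complex.mul_cpow_ofReal_nonneg (by positivity) (by positivity),
        ← Complex.ofReal_mul,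
        show ((n:ℝ) + 2) * (((n:ℝ) + 1) / ((n:ℝ) + 2)) = ((n:ℝ) + 1) by field_simp]
      push_cast
      ring_nf
    have hxs : ((n : ℂ) + 2) ^ (-a) * x = ((n : ℂ) + 2) ^ (-s) := by
      rw [hx, show ((n:ℂ)+2)⁻¹ = ((n:ℂ)+2) ^ (-1 : ℂ) by rw [Complex.cpow_neg_one],
        ← Complex.cpow_add _ _ hb]
      rw [ha]; ring_nf
    linear_combination -hkey + a * hxs

lemma gtend (s : ℂ) (hs : 1 < s.re) :
    Filter.Tendsto (fun n : ℕ => ((n:ℂ) + 1) ^ (-(s - 1))) Filter.atTop (nhds 0) := by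
  rw [tendsto_zero_iff_norm_tendsto_zero]
  have hnorm : ∀ n : ℕ, ‖((n:ℂ) + 1) ^ (-(s - 1))‖ = ((n:ℝ) + 1) ^ (-(s.re - 1)) := by
    intro n
    rw [show ((n:ℂ) + 1) = (((n:ℝ) + 1 : ℝ) : ℂ) by push_cast; ring,
      Complex.norm_cpow_eq_rpow_re_of_pos (by positivity)]
    congr 1
  simp only [hnorm]
  have h1 : Filter.Tendsto (fun x : ℝ => x ^ (-(s.re - 1))) Filter.atTop (nhds 0) :=
    tendsto_rpow_neg_atTop (by linarith)
  exact h1.comp (Filter.tendsto_atTop_add_const_right _ 1 tendsto_natCast_atTop_atTop)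

lemma telesc (s : ℂ) (hs : 1 < s.re)
    (hsum : Summable (fun n : ℕ => ((n:ℂ) + 1) ^ (-(s - 1)) - ((n:ℂ) + 2) ^ (-(s - 1)))) :
    HasSum (fun n : ℕ => ((n:ℂ) + 1) ^ (-(s - 1)) - ((n:ℂ) + 2) ^ (-(s - 1))) 1 := by
  set g : ℕ → ℂ := fun n => ((n:ℂ) + 1) ^ (-(s - 1)) with hg
  have hfun : (fun n : ℕ => ((n:ℂ) + 1) ^ (-(s - 1)) - ((n:ℂ) + 2) ^ (-(s - 1)))
      = fun n => g n - g (n + 1) := by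
    funext n
    rw [hg]
    push_cast
    ring_nf
  rw [hfun] at hsum ⊢
  rw [hsum.hasSum_iff_tendsto_nat]
  have hps : ∀ N : ℕ, ∑ i ∈ Finset.range N, (g i - g (i+1)) = g 0 - g N :=
    fun N => Finset.sum_range_sub' g N
  simp only [hps]
  have hg0 : g 0 = 1 := by simp [hg, Complex.one_cpow]
  rw [hg0]
  have hT := (tendsto_const_nhds (x := (1:ℂ))).sub (gtend s hs)
  simpa [hg] using hT

set_option maxHeartbeats 2000000 in
theorem zeta_series_identity (s : ℂ) (hs : 1 < s.re) :
    (s - 1) * (riemannZeta s - 1) - 1 =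
      -∑' r : ℕ,
        (∏ i ∈ Finset.range (r + 2), (s - 1 + i)) / ((r + 2).factorial : ℂ) *
          (riemannZeta (s + (r + 1)) - 1) := by
  -- coefficients
  set c : ℕ → ℂ := fun r => (∏ i ∈ Finset.range (r + 2), (s - 1 + i)) / ((r + 2).factorial : ℂ)
    with hc
  set F : ℕ × ℕ → ℂ := fun p => c p.1 * ((1 : ℂ) / ((p.2 : ℂ) + 2) ^ (s + ((p.1 : ℂ) + 1)))
    with hFdef
  have hre : ∀ r : ℕ, 1 < (s + ((r:ℂ) + 1)).re := by
    intro r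
    simp only [Complex.add_re, Complex.natCast_re, Complex.one_re]
    have : (0:ℝ) ≤ r := Nat.cast_nonneg r
    linarith
  -- summability of F
  have hu : Summable (fun r : ℕ => ‖c r‖ * (2:ℝ)⁻¹ ^ (r + 1)) := by
    have h0 := csummable (s - 1)
    have h1 := (summable_nat_add_iff 2).2 h0
    have h2 := h1.mul_left 2
    apply h2.congr
    intro k
    show 2 * (‖c (k)‖ * (2:ℝ)⁻¹ ^ (k + 2)) = ‖c k‖ * (2:ℝ)⁻¹ ^ (k + 1)
    rw [pow_succ]
    ring
  have hv : Summable (fun n : ℕ => ((n:ℝ) + 2) ^ (-s.re)) := by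
    have h0 := Real.summable_nat_rpow.2 (show -s.re < -1 by linarith)
    have h1 := (summable_nat_add_iff 2).2 h0
    apply h1.congr
    intro n
    push_cast
    ring_nf
  have hprodsum : Summable (fun p : ℕ × ℕ => (‖c p.1‖ * (2:ℝ)⁻¹ ^ (p.1 + 1)) * (((p.2:ℝ) + 2) ^ (-s.re))) :=
    hu.mul_of_nonneg hv (fun r => by positivity)
      (fun n => Real.rpow_nonneg (by positivity) _)
  have hFsum : Summable F := by
    apply Summable.of_norm_bounded hprodsum
    intro p
    rw [hFdef]
    simp only [norm_mul]
    rw [mul_assoc]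
    apply mul_le_mul_of_nonneg_left _ (norm_nonneg _)
    exact znorm s p.1 p.2 hs
  -- rows
  have hrow : ∀ r : ℕ, HasSum (fun n : ℕ => F (r, n))
      (c r * (riemannZeta (s + ((r:ℂ) + 1)) - 1)) := by
    intro r
    exact (zeta_tail (s + ((r:ℂ) + 1)) (hre r)).mul_left (c r)
  have hS : HasSum (fun r : ℕ => c r * (riemannZeta (s + ((r:ℂ) + 1)) - 1)) (∑' p, F p) :=
    HasSum.prod_fiberwise hFsum.hasSum hrow
  -- columns
  have hFsum' : Summable (fun p : ℕ × ℕ => F (p.2, p.1)) :=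
    ((Equiv.prodComm ℕ ℕ).summable_iff.2 hFsum)
  have hswap : ∑' p : ℕ × ℕ, F (p.2, p.1) = ∑' p, F p := by
    exact (Equiv.prodComm ℕ ℕ).tsum_eq F
  have hcol : HasSum (fun n : ℕ =>
      ((n : ℂ) + 1) ^ (-(s - 1)) - ((n : ℂ) + 2) ^ (-(s - 1)) - (s - 1) * ((n : ℂ) + 2) ^ (-s))
      (∑' p, F p) := by
    rw [← hswap]
    exact HasSum.prod_fiberwise hFsum'.hasSum (fun n => inner_r s n)
  -- zeta term
  have hC : HasSum (fun n : ℕ => (s - 1) * ((n:ℂ) + 2) ^ (-s)) ((s - 1) * (riemannZeta s - 1)) := by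
    have h2 : (fun n : ℕ => (s - 1) * ((n:ℂ) + 2) ^ (-s))
        = fun n : ℕ => (s - 1) * ((1:ℂ) / ((n:ℂ) + 2) ^ s) := by
      funext n
      rw [Complex.cpow_neg, one_div]
    rw [h2]
    exact (zeta_tail s hs).mul_left (s - 1)
  -- telescoping summable
  have hsumtele : Summable (fun n : ℕ => ((n:ℂ) + 1) ^ (-(s - 1)) - ((n:ℂ) + 2) ^ (-(s - 1))) := by
    have := hcol.summable.add hC.summable
    apply this.congr
    intro n
    ring
  have htele := telesc s hs hsumtele
  have hval : HasSum (fun n : ℕ =>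
      ((n : ℂ) + 1) ^ (-(s - 1)) - ((n : ℂ) + 2) ^ (-(s - 1)) - (s - 1) * ((n : ℂ) + 2) ^ (-s))
      (1 - (s - 1) * (riemannZeta s - 1)) := htele.sub hC
  have hSval : (∑' p, F p) = 1 - (s - 1) * (riemannZeta s - 1) := hcol.unique hval
  rw [hS.tsum_eq, hSval]
  ring
end

section
/- For every integer n ≥ 4, ∑_{k=2}^{n-2} C(n,k)·Bₖ·B_{n-k} = -(n+1)·Bₙ. -/
/-!
Differentiating `B(X) (eˣ - 1) = X`, where `B` is the exponential generating function of the
Bernoulli numbers, and eliminating `eˣ` gives the Riccati equation `B² = B - X B - X B'`.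
Comparing coefficients of `Xⁿ / n!` yields the full convolution
`∑_{k=0}^{n} C(n,k) Bₖ Bₙ₋ₖ = (1 - n) Bₙ - n Bₙ₋₁`; the four boundary terms
`k = 0, 1, n - 1, n` contribute `2 Bₙ - n Bₙ₋₁`, and removing them leaves `-(n + 1) Bₙ`.
-/

open PowerSeries Finset Nat

theorem bernoulliPowerSeries_sq (A : Type*) [CommRing A] [Algebra ℚ A] :
    bernoulliPowerSeries A ^ 2 =
      bernoulliPowerSeries A - X * bernoulliPowerSeries A -
        X * d⁄dX A (bernoulliPowerSeries A) := by
  set B := bernoulliPowerSeries A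
  have h : B * (exp A - 1) = X := bernoulliPowerSeries_mul_exp_sub_one A
  have hd : B * exp A + (exp A - 1) * d⁄dX A B = 1 := by
    simpa [Derivation.leibniz, derivative_exp] using congrArg (d⁄dX A) h
  linear_combination B * hd - d⁄dX A B * h - B * h

theorem PowerSeries.coeff_mk_div_factorial_mul_mk_div_factorial {K : Type*} [Field K] [CharZero K]
    (f g : ℕ → K) (n : ℕ) :
    coeff n (mk (fun k ↦ f k / k !) * mk (fun k ↦ g k / k !)) =
      (∑ k ∈ range (n + 1), n.choose k * f k * g (n - k)) / n ! := by
  rw [coeff_mul, Nat.sum_antidiagonal_eq_sum_range_succ_mk, sum_div]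
  refine sum_congr rfl fun k hk ↦ ?_
  have hkn : k ≤ n := Nat.lt_succ_iff.mp (mem_range.mp hk)
  simp only [coeff_mk, Nat.cast_choose K hkn]
  field_simp [factorial_ne_zero]

theorem sum_range_choose_mul_bernoulli_mul_bernoulli (n : ℕ) :
    ∑ k ∈ range (n + 1), (n.choose k : ℚ) * bernoulli k * bernoulli (n - k) =
      (1 - n) * bernoulli n - n * bernoulli (n - 1) := by
  rcases n with _ | m
  · simp
  have hcoeff := congrArg (coeff (m + 1)) (bernoulliPowerSeries_sq ℚ)
  rw [sq, bernoulliPowerSeries, Algebra.algebraMap_self] at hcoeff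
  simp only [RingHom.id_apply, coeff_mk_div_factorial_mul_mk_div_factorial, map_sub,
    coeff_succ_X_mul, coeff_derivative, coeff_mk] at hcoeff
  rw [div_eq_iff (by positivity)] at hcoeff
  rw [hcoeff, factorial_succ]
  push_cast
  field_simp
  ring

theorem Finset.sum_range_succ_eq_ends_add_sum_Icc {M : Type*} [AddCommMonoid M] (f : ℕ → M)
    {n : ℕ} (hn : 3 ≤ n) :
    ∑ k ∈ range (n + 1), f k = f 0 + f 1 + ∑ k ∈ Icc 2 (n - 2), f k + f (n - 1) + f n := by
  obtain ⟨m, rfl⟩ : ∃ m, n = m + 3 := ⟨n - 3, by omega⟩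
  rw [show m + 3 - 2 = m + 1 by omega, show m + 3 - 1 = m + 2 by omega,
    ← Ico_add_one_right_eq_Icc, sum_Ico_eq_sum_range, sum_range_succ, sum_range_succ,
    sum_range_succ', sum_range_succ']
  simp only [show m + 1 + 1 - 2 = m by omega, add_comm 2]
  abel

theorem bernoulli_convolution_euler (n : ℕ) (hn : 4 ≤ n) :
    ∑ k ∈ Finset.Icc 2 (n - 2), (n.choose k : ℚ) * bernoulli k * bernoulli (n - k) =
      -((n : ℚ) + 1) * bernoulli n := by
  have hfull := sum_range_choose_mul_bernoulli_mul_bernoulli n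
  rw [sum_range_succ_eq_ends_add_sum_Icc _ (by omega : 3 ≤ n)] at hfull
  have hchoose : n.choose (n - 1) = n := by
    rw [choose_symm_of_eq_add (by omega : n = (n - 1) + 1), choose_one_right]
  simp only [choose_zero_right, choose_one_right, hchoose, choose_self, Nat.sub_zero,
    Nat.sub_self, show n - (n - 1) = 1 by omega, bernoulli_zero, bernoulli_one] at hfull
  linear_combination hfull
end

section
/- The improper integral ∫₀^∞ e^{-t}·((t/(e^t - 1))² - 1) dt equals -4ζ(3) + 2ζ(2) + 1. -/
/-!
Since `e^{-t} (t / (e^t - 1))² = t² e^{-3t} / (1 - e^{-t})² = t² ∑ₙ (n + 1) e^{-(n+3)t}`, the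
Mellin transform at `s = 3` of this power series in `e^{-t}` is the Dirichlet series
`Γ(3) ∑ₙ (n + 1) / (n + 3)³ = ∑_{m ≥ 3} (2 / m² - 4 / m³) = 2 (ζ(2) - 5/4) - 4 (ζ(3) - 9/8)`.
Subtracting `∫₀^∞ e^{-t} dt = 1` gives the claim.
-/

open MeasureTheory Real Set

lemma div_exp_sub_one_le_one {t : ℝ} (ht : 0 ≤ t) : t / (rexp t - 1) ≤ 1 :=
  div_le_one_of_le₀ (by linarith [add_one_le_exp t]) (by linarith [add_one_le_exp t])

lemma integrableOn_exp_neg_mul_div_exp_sub_one_sq :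
    IntegrableOn (fun t : ℝ => rexp (-t) * (t / (rexp t - 1)) ^ 2) (Ioi 0) := by
  refine (integrableOn_exp_neg_Ioi 0).mono' (by fun_prop) ?_
  filter_upwards [ae_restrict_mem measurableSet_Ioi] with t (ht : 0 < t)
  have h0 : 0 ≤ t / (rexp t - 1) := div_nonneg ht.le (by linarith [add_one_le_exp t])
  rw [norm_of_nonneg (by positivity)]
  exact mul_le_of_le_one_right (exp_pos _).le (pow_le_one₀ h0 (div_exp_sub_one_le_one ht.le))

lemma hasSum_nat_add_one_mul_exp_neg_nat_add_three_mul {t : ℝ} (ht : 0 < t) :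
    HasSum (fun n : ℕ => ((n : ℝ) + 1) * rexp (-((n : ℝ) + 3) * t))
      (rexp (-t) / (rexp t - 1) ^ 2) := by
  have hr : rexp (-t) < 1 := exp_lt_one_iff.mpr (neg_lt_zero.mpr ht)
  have h := (hasSum_choose_mul_geometric_of_norm_lt_one 1
    (by rwa [norm_of_nonneg (exp_pos _).le])).mul_left (rexp (-t) ^ 3)
  have hval : rexp (-t) / (rexp t - 1) ^ 2 =
      rexp (-t) ^ 3 * (1 / (1 - rexp (-t)) ^ (1 + 1)) := by
    have h0 := (exp_pos (-t)).ne'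
    have h1 : 1 - rexp (-t) ≠ 0 := by linarith
    rw [show rexp t - 1 = (1 - rexp (-t)) / rexp (-t) by rw [exp_neg]; field_simp]
    field_simp
  rw [hval]
  refine h.congr_fun fun n => ?_
  rw [← exp_nat_mul, ← exp_nat_mul, Nat.choose_one_right, mul_left_comm, ← exp_add]
  push_cast
  ring_nf

lemma hasSum_one_div_nat_add_pow {k : ℕ} (hk : 1 < k) (N : ℕ) :
    HasSum (fun n : ℕ => 1 / ((n + N : ℕ) : ℂ) ^ k)
      (riemannZeta k - ∑ i ∈ Finset.range N, 1 / (i : ℂ) ^ k) := by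
  refine (hasSum_nat_add_iff' N).mpr ?_
  rw [zeta_nat_eq_tsum_of_gt_one hk]
  refine Summable.hasSum ?_
  simpa using Complex.summable_one_div_nat_cpow.mpr (by simpa using hk : 1 < (k : ℂ).re)

lemma hasSum_two_mul_nat_add_one_div_nat_add_three_pow_three :
    HasSum (fun n : ℕ => 2 * ((n : ℂ) + 1) / ((n : ℂ) + 3) ^ 3)
      (2 * riemannZeta 2 - 4 * riemannZeta 3 + 2) := by
  have h2 := (hasSum_one_div_nat_add_pow one_lt_two 3).mul_left 2
  have h3 := (hasSum_one_div_nat_add_pow (by norm_num : 1 < 3) 3).mul_left 4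
  have hval : 2 * riemannZeta 2 - 4 * riemannZeta 3 + 2 =
      2 * (riemannZeta (2 : ℕ) - ∑ i ∈ Finset.range 3, 1 / (i : ℂ) ^ 2) -
        4 * (riemannZeta (3 : ℕ) - ∑ i ∈ Finset.range 3, 1 / (i : ℂ) ^ 3) := by
    simp only [Finset.sum_range_succ]
    norm_num
    ring
  rw [hval]
  refine (h2.sub h3).congr_fun fun n => ?_
  have : (n : ℂ) + 3 ≠ 0 := by exact_mod_cast (n + 2).succ_ne_zero
  push_cast
  field_simp
  ring

lemma mellin_exp_neg_div_exp_sub_one_sq_three :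
    mellin (fun t => ((rexp (-t) / (rexp t - 1) ^ 2 : ℝ) : ℂ)) 3 =
      ((∫ t in Ioi 0, rexp (-t) * (t / (rexp t - 1)) ^ 2 : ℝ) : ℂ) := by
  rw [mellin, ← integral_complex_ofReal]
  refine setIntegral_congr_fun measurableSet_Ioi fun t _ => ?_
  rw [show (3 : ℂ) - 1 = (2 : ℕ) by norm_num, Complex.cpow_natCast, smul_eq_mul]
  push_cast
  rw [div_pow]
  ring

lemma integral_exp_neg_mul_div_exp_sub_one_sq :
    ((∫ t in Ioi 0, rexp (-t) * (t / (rexp t - 1)) ^ 2 : ℝ) : ℂ) =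
      2 * riemannZeta 2 - 4 * riemannZeta 3 + 2 := by
  have hseries := hasSum_two_mul_nat_add_one_div_nat_add_three_pow_three
  have hsummable : Summable fun n : ℕ => ‖(n : ℂ) + 1‖ / ((n : ℝ) + 3) ^ (3 : ℂ).re := by
    refine ((summable_norm_iff.mpr hseries.summable).div_const 2).congr fun n => ?_
    have h3 : ‖(n : ℂ) + 3‖ = (n : ℝ) + 3 := by exact_mod_cast Complex.norm_natCast (n + 3)
    rw [norm_div, norm_mul, norm_pow, h3, Complex.norm_two,
      show (3 : ℂ).re = (3 : ℕ) by norm_num, rpow_natCast]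
    ring
  have hmellin := hasSum_mellin (a := fun n : ℕ => (n : ℂ) + 1) (p := fun n => (n : ℝ) + 3)
    (F := fun t => ((rexp (-t) / (rexp t - 1) ^ 2 : ℝ) : ℂ)) (fun n => Or.inr (by positivity)) (by norm_num : (0 : ℝ) < (3 : ℂ).re)
    (fun t ht => by exact_mod_cast hasSum_nat_add_one_mul_exp_neg_nat_add_three_mul ht)
    hsummable
  rw [← mellin_exp_neg_div_exp_sub_one_sq_three]
  refine hmellin.unique (hseries.congr_fun fun n => ?_)
  have hΓ : Complex.Gamma 3 = 2 := by simp
  rw [hΓ, show (3 : ℂ) = (3 : ℕ) by norm_num, Complex.cpow_natCast]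
  push_cast
  ring

theorem integral_exp_neg_mul_bernoulli_sq :
    ((∫ t in Set.Ioi (0:ℝ), Real.exp (-t) * ((t / (Real.exp t - 1)) ^ 2 - 1) : ℝ) : ℂ) =
      -4 * riemannZeta 3 + 2 * riemannZeta 2 + 1 := by
  have hsplit : ∫ t in Ioi (0 : ℝ), rexp (-t) * ((t / (rexp t - 1)) ^ 2 - 1) =
      (∫ t in Ioi 0, rexp (-t) * (t / (rexp t - 1)) ^ 2) - ∫ t in Ioi 0, rexp (-t) := by
    rw [← integral_sub integrableOn_exp_neg_mul_div_exp_sub_one_sq (integrableOn_exp_neg_Ioi 0)]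
    simp_rw [mul_sub, mul_one]
  rw [hsplit, integral_exp_neg_Ioi_zero, Complex.ofReal_sub,
    integral_exp_neg_mul_div_exp_sub_one_sq]
  push_cast
  ring
end

section
/- For every x > 0, ∫₀^x (-m)/(e^{-m} - 1) dm = x²/2 + ζ(2) - ∑_{k=1}^∞ (x e^{-kx}/k + e^{-kx}/k²). -/
open MeasureTheory Set

noncomputable def fterm (k : ℕ) (m : ℝ) : ℝ :=
  m * Real.exp (-((k : ℝ) + 1) * m) / ((k : ℝ) + 1) +
    Real.exp (-((k : ℝ) + 1) * m) / ((k : ℝ) + 1) ^ 2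

lemma k1_pos (k : ℕ) : (0:ℝ) < (k:ℝ) + 1 := by positivity

lemma summable_inv_sq : Summable (fun k : ℕ => 1 / ((k:ℝ) + 1) ^ 2) := by
  have h := Real.summable_one_div_nat_pow.mpr (le_refl 2)
  have := (summable_nat_add_iff (f := fun n : ℕ => 1 / (n:ℝ) ^ 2) 1).2 h
  refine this.congr fun n => ?_
  push_cast
  ring_nf

lemma fterm_bound (k : ℕ) (m : ℝ) (hm : 0 ≤ m) : ‖fterm k m‖ ≤ 2 / ((k:ℝ) + 1) ^ 2 := by
  have hk := k1_pos k
  have he : Real.exp (-((k : ℝ) + 1) * m) ≤ 1 := by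
    apply Real.exp_le_one_iff.mpr
    nlinarith
  have hep : 0 < Real.exp (-((k : ℝ) + 1) * m) := Real.exp_pos _
  have h1 : m * Real.exp (-((k : ℝ) + 1) * m) / ((k : ℝ) + 1) ≤ 1 / ((k:ℝ) + 1) ^ 2 := by
    rw [div_le_div_iff₀ hk (by positivity)]
    have ht : ((k:ℝ) + 1) * m ≤ Real.exp (((k:ℝ) + 1) * m) := by
      nlinarith [Real.add_one_le_exp (((k:ℝ) + 1) * m)]
    have hneg : Real.exp (-((k:ℝ) + 1) * m) = (Real.exp (((k:ℝ) + 1) * m))⁻¹ := by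
      rw [neg_mul, Real.exp_neg]
    rw [hneg, one_mul]
    have hE : 0 < Real.exp (((k:ℝ) + 1) * m) := Real.exp_pos _
    have hEE : Real.exp (((k:ℝ) + 1) * m) * (Real.exp (((k:ℝ) + 1) * m))⁻¹ = 1 :=
      mul_inv_cancel₀ (ne_of_gt hE)
    have key : ((k:ℝ) + 1) * m * (Real.exp (((k:ℝ) + 1) * m))⁻¹ ≤ 1 := by
      calc ((k:ℝ) + 1) * m * (Real.exp (((k:ℝ) + 1) * m))⁻¹
          ≤ Real.exp (((k:ℝ) + 1) * m) * (Real.exp (((k:ℝ) + 1) * m))⁻¹ :=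
            mul_le_mul_of_nonneg_right ht (inv_nonneg.mpr hE.le)
        _ = 1 := hEE
    nlinarith [key, hk, inv_pos.mpr hE]
  have h2 : Real.exp (-((k : ℝ) + 1) * m) / ((k : ℝ) + 1) ^ 2 ≤ 1 / ((k:ℝ) + 1) ^ 2 := by
    apply div_le_div_of_nonneg_right he (by positivity) |>.trans_eq rfl
  have hnn : 0 ≤ fterm k m := by
    unfold fterm; positivity
  rw [Real.norm_eq_abs, abs_of_nonneg hnn]
  have h3 : 2 / ((k:ℝ)+1) ^ 2 = 1 / ((k:ℝ)+1) ^ 2 + 1 / ((k:ℝ)+1) ^ 2 := by ring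
  unfold fterm
  linarith

lemma fterm_hasDerivAt (k : ℕ) (m : ℝ) :
    HasDerivAt (fterm k) (-(m * Real.exp (-((k : ℝ) + 1) * m))) m := by
  have hk := k1_pos k
  set c : ℝ := -((k : ℝ) + 1) with hc
  have hexp : HasDerivAt (fun y : ℝ => Real.exp (c * y)) (c * Real.exp (c * m)) m := by
    simpa [mul_comm] using ((hasDerivAt_id m).const_mul c).exp
  have h1 : HasDerivAt (fun y : ℝ => y * Real.exp (c * y))
      (1 * Real.exp (c * m) + m * (c * Real.exp (c * m))) m :=
    (hasDerivAt_id m).mul hexp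
  have h := ((h1.div_const ((k:ℝ)+1)).add (hexp.div_const (((k:ℝ)+1)^2)))
  refine h.congr_deriv ?_; symm
  have : c = -((k:ℝ)+1) := hc
  field_simp
  ring

lemma summable_fterm (m : ℝ) (hm : 0 ≤ m) : Summable fun k => fterm k m :=
  Summable.of_norm_bounded (summable_inv_sq.mul_left 2)
    (fun k => by rw [mul_one_div]; exact fterm_bound k m hm)

lemma geom_tsum (m : ℝ) (hm : 0 < m) :
    ∑' k : ℕ, Real.exp (-((k : ℝ) + 1) * m) = Real.exp (-m) / (1 - Real.exp (-m)) := by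
  have hr0 : (0:ℝ) ≤ Real.exp (-m) := (Real.exp_pos _).le
  have hr1 : Real.exp (-m) < 1 := by
    rw [Real.exp_lt_one_iff]; linarith
  have hgeom : ∑' k : ℕ, Real.exp (-m) ^ k = (1 - Real.exp (-m))⁻¹ :=
    tsum_geometric_of_lt_one hr0 hr1
  have hterm : ∀ k : ℕ, Real.exp (-((k : ℝ) + 1) * m) = Real.exp (-m) * Real.exp (-m) ^ k := by
    intro k
    rw [← Real.exp_nat_mul, ← Real.exp_add]
    ring_nf
  calc ∑' k : ℕ, Real.exp (-((k : ℝ) + 1) * m)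
      = ∑' k : ℕ, Real.exp (-m) * Real.exp (-m) ^ k := by exact tsum_congr hterm
    _ = Real.exp (-m) * (1 - Real.exp (-m))⁻¹ := by rw [tsum_mul_left, hgeom]
    _ = Real.exp (-m) / (1 - Real.exp (-m)) := by rw [div_eq_mul_inv]

lemma summable_exp_geom (c : ℝ) (hc : 0 < c) :
    Summable fun k : ℕ => Real.exp (-((k : ℝ) + 1) * c) := by
  have hr0 : (0:ℝ) ≤ Real.exp (-c) := (Real.exp_pos _).le
  have hr1 : Real.exp (-c) < 1 := by rw [Real.exp_lt_one_iff]; linarith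
  have := (summable_geometric_of_lt_one hr0 hr1).mul_left (Real.exp (-c))
  refine this.congr fun k => ?_
  rw [← Real.exp_nat_mul, ← Real.exp_add]
  ring_nf

theorem integral_neg_m_div_exp_neg_sub_one (x : ℝ) (hx : 0 < x) :
    ((∫ m in (0:ℝ)..x, (-m) / (Real.exp (-m) - 1) : ℝ) : ℂ) =
      (x : ℂ) ^ 2 / 2 + riemannZeta 2 -
        ((∑' k : ℕ, (x * Real.exp (-((k : ℝ) + 1) * x) / ((k : ℝ) + 1) +
            Real.exp (-((k : ℝ) + 1) * x) / ((k : ℝ) + 1) ^ 2) : ℝ) : ℂ) := by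
  classical
  set g : ℝ → ℝ := fun m => ∑' k : ℕ, fterm k m with hg
  set F : ℝ → ℝ := fun m => m ^ 2 / 2 - g m with hF
  -- continuity of g on Icc 0 x
  have hgcont : ContinuousOn g (Icc 0 x) := by
    rw [hg]
    apply continuousOn_tsum (f := fterm) (u := fun k : ℕ => 2 / ((k:ℝ) + 1) ^ 2)
    · intro k
      apply Continuous.continuousOn
      unfold fterm
      continuity
    · exact summable_inv_sq.mul_left 2 |>.congr fun k => by ring
    · intro k m hm
      exact fterm_bound k m hm.1
  have hFcont : ContinuousOn F (Icc 0 x) :=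
    ((continuous_pow 2).continuousOn.div_const 2).sub hgcont
  -- derivative of g on Ioo 0 x
  have hgderiv : ∀ y ∈ Ioo 0 x, HasDerivAt g (-(y * (Real.exp (-y) / (1 - Real.exp (-y))))) y := by
    intro y hy
    have hy0 : 0 < y := hy.1
    have ht : IsOpen (Ioo (y/2) (x+1)) := isOpen_Ioo
    have hmem : y ∈ Ioo (y/2) (x+1) := ⟨by linarith, by linarith [hy.2]⟩
    have key : HasDerivAt g (∑' k : ℕ, -(y * Real.exp (-((k : ℝ) + 1) * y))) y := by
      apply hasDerivAt_tsum_of_isPreconnected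
        (u := fun k : ℕ => (x+1) * Real.exp (-((k : ℝ) + 1) * (y/2)))
        ((summable_exp_geom (y/2) (by linarith)).mul_left (x+1)) ht
        (isPreconnected_Ioo)
        (fun k z _ => fterm_hasDerivAt k z)
        ?_ hmem (summable_fterm y hy0.le) hmem
      intro k z hz
      have hz0 : 0 < z := lt_trans (by linarith) hz.1
      have h1 : z ≤ x + 1 := hz.2.le
      have h2 : Real.exp (-((k : ℝ) + 1) * z) ≤ Real.exp (-((k : ℝ) + 1) * (y/2)) := by
        apply Real.exp_le_exp.mpr
        have hk := k1_pos k
        nlinarith [hz.1]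
      rw [norm_neg, Real.norm_eq_abs, abs_of_nonneg (by positivity)]
      have hep : 0 ≤ Real.exp (-((k : ℝ) + 1) * z) := (Real.exp_pos _).le
      nlinarith [Real.exp_pos (-((k : ℝ) + 1) * (y/2))]
    have hsum : ∑' k : ℕ, -(y * Real.exp (-((k : ℝ) + 1) * y))
        = -(y * (Real.exp (-y) / (1 - Real.exp (-y)))) := by
      rw [tsum_neg, tsum_mul_left, geom_tsum y hy0]
    rwa [hsum] at key
  -- derivative of F on Ioo 0 x equals integrand
  have hFderiv : ∀ y ∈ Ioo 0 x, HasDerivAt F ((-y) / (Real.exp (-y) - 1)) y := by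
    intro y hy
    have hy0 : 0 < y := hy.1
    have h1 : HasDerivAt (fun m : ℝ => m ^ 2 / 2) y y := by
      simpa using ((hasDerivAt_pow 2 y).div_const 2)
    have h := h1.sub (hgderiv y hy)
    refine h.congr_deriv ?_; symm
    have he1 : Real.exp (-y) < 1 := by rw [Real.exp_lt_one_iff]; linarith
    have he0 : 0 < Real.exp (-y) := Real.exp_pos _
    have hne : Real.exp (-y) - 1 ≠ 0 := ne_of_lt (by linarith)
    have hne2 : (1:ℝ) - Real.exp (-y) ≠ 0 := ne_of_gt (by linarith)
    field_simp
    ring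
  -- integrability of the integrand
  have hint : IntervalIntegrable (fun m : ℝ => (-m) / (Real.exp (-m) - 1)) volume 0 x := by
    rw [intervalIntegrable_iff_integrableOn_Ioc_of_le hx.le]
    have hmeas : Measurable (fun m : ℝ => (-m) / (Real.exp (-m) - 1)) :=
      measurable_neg.div ((Real.measurable_exp.comp measurable_neg).sub measurable_const)
    apply Integrable.mono' (integrableOn_const (C := Real.exp x) measure_Ioc_lt_top.ne)
      hmeas.aestronglyMeasurable
    rw [ae_restrict_iff' measurableSet_Ioc]
    apply ae_of_all
    intro m hm
    have hm0 : 0 < m := hm.1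
    have hmx : m ≤ x := hm.2
    have he1 : Real.exp (-m) < 1 := by rw [Real.exp_lt_one_iff]; linarith
    have he0 : 0 < Real.exp (-m) := Real.exp_pos _
    have heq : (-m) / (Real.exp (-m) - 1) = m / (1 - Real.exp (-m)) := by
      rw [div_eq_div_iff (by linarith) (by linarith)]; ring
    rw [Real.norm_eq_abs, heq, abs_of_nonneg (div_nonneg hm0.le (by linarith))]
    rw [div_le_iff₀ (by linarith)]
    have hxm : 1 ≤ Real.exp (x - m) := Real.one_le_exp (by linarith)
    have hme : m + 1 ≤ Real.exp m := Real.add_one_le_exp m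
    have h1 : Real.exp x * (1 - Real.exp (-m)) = Real.exp (x - m) * (Real.exp m - 1) := by
      rw [Real.exp_sub, Real.exp_neg]
      field_simp
    rw [h1]
    nlinarith
  -- FTC
  have hFTC : ∫ m in (0:ℝ)..x, (-m) / (Real.exp (-m) - 1) = F x - F 0 :=
    intervalIntegral.integral_eq_sub_of_hasDerivAt_of_le hx.le hFcont hFderiv hint
  -- g 0 = π²/6
  have hg0 : g 0 = Real.pi ^ 2 / 6 := by
    have hbasel : HasSum (fun n : ℕ => (1 : ℝ) / (n : ℝ) ^ 2) (Real.pi ^ 2 / 6) :=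
      hasSum_zeta_two
    have hshift : HasSum (fun n : ℕ => (1 : ℝ) / ((n : ℝ) + 1) ^ 2) (Real.pi ^ 2 / 6) := by
      have := (hasSum_nat_add_iff (f := fun n : ℕ => (1:ℝ) / (n:ℝ) ^ 2) 1).2
        (by simpa using hbasel)
      refine this.congr_fun fun n => ?_
      push_cast
      ring_nf
    have : g 0 = ∑' k : ℕ, (1 : ℝ) / ((k : ℝ) + 1) ^ 2 := by
      apply tsum_congr
      intro k
      unfold fterm
      simp
    rw [this, hshift.tsum_eq]
  -- assemble
  have hgx : g x = ∑' k : ℕ, (x * Real.exp (-((k : ℝ) + 1) * x) / ((k : ℝ) + 1) +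
      Real.exp (-((k : ℝ) + 1) * x) / ((k : ℝ) + 1) ^ 2) := rfl
  have hreal : ∫ m in (0:ℝ)..x, (-m) / (Real.exp (-m) - 1)
      = x ^ 2 / 2 + Real.pi ^ 2 / 6 - g x := by
    rw [hFTC, hF]
    simp only
    rw [hg0]
    ring
  rw [hreal, riemannZeta_two, ← hgx]
  push_cast
  ring
end
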